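/- arXiv:quant-ph/0510078 — 4 statements merged into one kernel-verified Lean document; each statement's English description precedes it below -/
import Mathlib

section
/- The robustness of entanglement is a convex function: for density matrices σ₁, σ₂ on C^m ⊗ C^m and λ ∈ [0,1], R(λσ₁ + (1−λ)σ₂) ≤ λR(σ₁) + (1−λ)R(σ₂). -/
open scoped BigOperators Matrix ComplexOrder

noncomputable section

/-- The pure product state |a⟩⟨a| ⊗ |b⟩⟨b| as a matrix on the bipartite index type. -/
def prodState {α β : Type*} [Fintype α] [Fintype β] (a : α → ℂ) (b : β → ℂ) :
    Matrix (α × β) (α × β) ℂ :=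
  fun x y => (a x.1 * star (a y.1)) * (b x.2 * star (b y.2))

/-- A bipartite matrix is separable if it is a convex combination of pure product states. -/
def SepState {α β : Type*} [Fintype α] [Fintype β]
    (σ : Matrix (α × β) (α × β) ℂ) : Prop :=
  ∃ (k : ℕ) (p : Fin k → ℝ) (a : Fin k → α → ℂ) (b : Fin k → β → ℂ),
    (∀ i, 0 ≤ p i) ∧ (∑ i, p i = 1) ∧
    (∀ i, ∑ x, ‖a i x‖ ^ 2 = 1) ∧ (∀ i, ∑ x, ‖b i x‖ ^ 2 = 1) ∧
    σ = ∑ i, ((p i : ℂ)) • prodState (a i) (b i)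

/-- A density matrix: positive semidefinite with unit trace. -/
def IsDensity {n : Type*} [Fintype n] [DecidableEq n] (σ : Matrix n n ℂ) : Prop :=
  σ.PosSemidef ∧ σ.trace = 1

/-- The robustness of entanglement: the least s ≥ 0 such that mixing σ with some
separable state π with weights 1/(1+s), s/(1+s) yields a separable state. -/
def robustness {α β : Type*} [Fintype α] [Fintype β] [DecidableEq α] [DecidableEq β]
    (σ : Matrix (α × β) (α × β) ℂ) : ℝ :=
  sInf { s : ℝ | 0 ≤ s ∧ ∃ π : Matrix (α × β) (α × β) ℂ, SepState π ∧
    SepState ((((1 + s)⁻¹ : ℝ) : ℂ) • σ + (((s / (1 + s)) : ℝ) : ℂ) • π) }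

/-!
A number `s ≥ 0` is feasible for `σ` exactly when `σ = (1 + s) ρ - s π` with `ρ, π`
separable. Because separable states form a convex set, feasible decompositions of `σ₁` and
`σ₂` combine with weights `t, 1 - t` into one of the mixture with `s = t s₁ + (1 - t) s₂`,
so the infimum is convex, provided the feasible sets are nonempty (`sInf ∅ = 0` in `ℝ`).
For nonemptiness: by polarization and Kronecker products, pure product states span all
matrices over `ℂ`, so a Hermitian `σ` is a real combination of them, i.e. `σ = a ρ - b π`
with `a, b ≥ 0` and `ρ, π` separable; taking traces gives `a = 1 + b`.
-/

open scoped ComplexStarModule Kronecker Pointwise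

section RobustnessSet

variable {E : Type*} [AddCommGroup E] [Module ℝ E]

-- The feasible set in the definition of `robustness`, with `K` in place of the separable states.
def robustnessSet (K : Set E) (x : E) : Set ℝ :=
  {s | 0 ≤ s ∧ ∃ π ∈ K, (1 + s)⁻¹ • x + (s / (1 + s)) • π ∈ K}

theorem mem_robustnessSet_iff {K : Set E} {x : E} {s : ℝ} :
    s ∈ robustnessSet K x ↔ 0 ≤ s ∧ ∃ π ∈ K, ∃ ρ ∈ K, x + s • π = (1 + s) • ρ := by
  refine and_congr_right fun hs => exists_congr fun π => and_congr_right fun _ => ?_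
  have hs' : 1 + s ≠ 0 := by positivity
  have hmix : (1 + s)⁻¹ • x + (s / (1 + s)) • π = (1 + s)⁻¹ • (x + s • π) := by module
  simp only [hmix, ← inv_smul_eq_iff₀ hs', exists_eq_right']

theorem Convex.smul_add_smul_mem_robustnessSet {K : Set E} (hK : Convex ℝ K) {x₁ x₂ : E}
    {s₁ s₂ a b : ℝ} (h₁ : s₁ ∈ robustnessSet K x₁) (h₂ : s₂ ∈ robustnessSet K x₂)
    (ha : 0 ≤ a) (hb : 0 ≤ b) (hab : a + b = 1) :
    a * s₁ + b * s₂ ∈ robustnessSet K (a • x₁ + b • x₂) := by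
  obtain ⟨hs₁, π₁, hπ₁, ρ₁, hρ₁, e₁⟩ := mem_robustnessSet_iff.1 h₁
  obtain ⟨hs₂, π₂, hπ₂, ρ₂, hρ₂, e₂⟩ := mem_robustnessSet_iff.1 h₂
  obtain ⟨π, hπ, eπ⟩ :=
    hK.exists_mem_add_smul_eq hπ₁ hπ₂ (mul_nonneg ha hs₁) (mul_nonneg hb hs₂)
  obtain ⟨ρ, hρ, eρ⟩ := hK.exists_mem_add_smul_eq hρ₁ hρ₂
    (mul_nonneg ha (by positivity : (0 : ℝ) ≤ 1 + s₁))
    (mul_nonneg hb (by positivity : (0 : ℝ) ≤ 1 + s₂))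
  refine mem_robustnessSet_iff.2 ⟨by positivity, π, hπ, ρ, hρ, ?_⟩
  have hsum : a * (1 + s₁) + b * (1 + s₂) = 1 + (a * s₁ + b * s₂) := by
    linear_combination hab
  rw [← hsum, eρ, eπ]
  linear_combination (norm := module) a • e₁ + b • e₂

theorem Convex.convexOn_sInf_robustnessSet {K : Set E} (hK : Convex ℝ K) :
    ConvexOn ℝ {x | (robustnessSet K x).Nonempty} fun x => sInf (robustnessSet K x) := by
  refine ⟨fun x ⟨s₁, h₁⟩ y ⟨s₂, h₂⟩ a b ha hb hab =>
    ⟨_, hK.smul_add_smul_mem_robustnessSet h₁ h₂ ha hb hab⟩, fun x hx y hy a b ha hb hab => ?_⟩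
  have hbdd : ∀ z, BddBelow (robustnessSet K z) := fun z => ⟨0, fun s hs => hs.1⟩
  calc sInf (robustnessSet K (a • x + b • y))
      ≤ sInf (a • robustnessSet K x + b • robustnessSet K y) := by
        refine csInf_le_csInf (hbdd _) (hx.smul_set.add hy.smul_set) ?_
        rintro _ ⟨_, ⟨s₁, h₁, rfl⟩, _, ⟨s₂, h₂, rfl⟩, rfl⟩
        exact hK.smul_add_smul_mem_robustnessSet h₁ h₂ ha hb hab
    _ = a • sInf (robustnessSet K x) + b • sInf (robustnessSet K y) := by
        rw [csInf_add hx.smul_set ((hbdd x).smul_of_nonneg ha) hy.smul_set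
          ((hbdd y).smul_of_nonneg hb), Real.sInf_smul_of_nonneg ha,
          Real.sInf_smul_of_nonneg hb]

theorem exists_eq_smul_sub_smul_of_mem_span {s : Set E} (hs : s.Nonempty) {x : E}
    (hx : x ∈ Submodule.span ℝ s) :
    ∃ a b : ℝ, 0 ≤ a ∧ 0 ≤ b ∧
      ∃ y ∈ convexHull ℝ s, ∃ z ∈ convexHull ℝ s, x = a • y - b • z := by
  have hconv := convex_convexHull ℝ s
  induction hx using Submodule.span_induction with
  | mem x hx => exact ⟨1, 0, zero_le_one, le_rfl, x, subset_convexHull ℝ s hx, x,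
      subset_convexHull ℝ s hx, by simp⟩
  | zero =>
    obtain ⟨w, hw⟩ := hs
    exact ⟨0, 0, le_rfl, le_rfl, w, subset_convexHull ℝ s hw, w, subset_convexHull ℝ s hw,
      by simp⟩
  | add x x' _ _ ih ih' =>
    obtain ⟨a, b, ha, hb, y, hy, z, hz, rfl⟩ := ih
    obtain ⟨a', b', ha', hb', y', hy', z', hz', rfl⟩ := ih'
    obtain ⟨y'', hy'', ey⟩ := hconv.exists_mem_add_smul_eq hy hy' ha ha'
    obtain ⟨z'', hz'', ez⟩ := hconv.exists_mem_add_smul_eq hz hz' hb hb'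
    refine ⟨a + a', b + b', by positivity, by positivity, y'', hy'', z'', hz'', ?_⟩
    rw [ey, ez]
    module
  | smul c x _ ih =>
    obtain ⟨a, b, ha, hb, y, hy, z, hz, rfl⟩ := ih
    rcases le_total 0 c with hc | hc
    · exact ⟨c * a, c * b, by positivity, by positivity, y, hy, z, hz, by module⟩
    · exact ⟨-c * b, -c * a, mul_nonneg (neg_nonneg.2 hc) hb, mul_nonneg (neg_nonneg.2 hc) ha,
        z, hz, y, hy, by module⟩

end RobustnessSet

theorem mem_span_real_of_isSelfAdjoint {A : Type*} [AddCommGroup A] [Module ℂ A]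
    [StarAddMonoid A] [StarModule ℂ A] {s : Set A} (hs : ∀ a ∈ s, IsSelfAdjoint a) {x : A}
    (hx : x ∈ Submodule.span ℂ s) (hx' : IsSelfAdjoint x) : x ∈ Submodule.span ℝ s := by
  suffices ∀ y ∈ Submodule.span ℂ s,
      (ℜ y : A) ∈ Submodule.span ℝ s ∧ (ℑ y : A) ∈ Submodule.span ℝ s from
    hx'.coe_realPart ▸ (this x hx).1
  intro y hy
  induction hy using Submodule.span_induction with
  | mem y hy =>
    rw [(hs y hy).coe_realPart, (hs y hy).imaginaryPart]
    exact ⟨Submodule.subset_span hy, Submodule.zero_mem _⟩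
  | zero => simp
  | add y y' _ _ ih ih' =>
    simp only [map_add, AddMemClass.coe_add]
    exact ⟨add_mem ih.1 ih'.1, add_mem ih.2 ih'.2⟩
  | smul c y _ ih =>
    rw [realPart_smul, imaginaryPart_smul]
    simp only [AddSubgroupClass.coe_sub, selfAdjoint.val_smul, AddSubgroup.coe_add]
    exact ⟨sub_mem (Submodule.smul_mem _ _ ih.1) (Submodule.smul_mem _ _ ih.2),
      add_mem (Submodule.smul_mem _ _ ih.2) (Submodule.smul_mem _ _ ih.1)⟩

namespace Matrix

open Complex

theorem vecMulVec_star_polarization {n : Type*} (u v : n → ℂ) :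
    (4 : ℂ) • vecMulVec u (star v) =
      vecMulVec (u + v) (star (u + v)) - vecMulVec (u - v) (star (u - v)) +
        I • vecMulVec (u + I • v) (star (u + I • v)) -
          I • vecMulVec (u - I • v) (star (u - I • v)) := by
  ext i j
  simp only [vecMulVec_apply, smul_apply, sub_apply, add_apply, Pi.add_apply, Pi.sub_apply,
    Pi.star_apply, Pi.smul_apply, star_add, star_sub, star_smul, smul_eq_mul, star_def, conj_I]
  ring_nf
  rw [I_sq]
  ring

theorem span_vecMulVec_star_self {n : Type*} [Fintype n] [DecidableEq n] :
    Submodule.span ℂ (Set.range fun u : n → ℂ => vecMulVec u (star u)) = ⊤ := by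
  set S := Submodule.span ℂ (Set.range fun u : n → ℂ => vecMulVec u (star u))
  have hmem : ∀ u : n → ℂ, vecMulVec u (star u) ∈ S :=
    fun u => Submodule.subset_span ⟨u, rfl⟩
  rw [eq_top_iff, ← (stdBasis ℂ n n).span_eq, Submodule.span_le]
  rintro _ ⟨⟨i, j⟩, rfl⟩
  have hsingle : single i j (1 : ℂ) = vecMulVec (Pi.single i 1) (star (Pi.single j 1)) := by
    ext x y
    simp only [vecMulVec_apply, single_apply, Pi.star_apply, Pi.single_apply]
    split_ifs <;> simp_all [eq_comm]
  rw [stdBasis_eq_single, SetLike.mem_coe, hsingle,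
    ← Submodule.smul_mem_iff _ (four_ne_zero (α := ℂ)), vecMulVec_star_polarization]
  exact sub_mem (add_mem (sub_mem (hmem _) (hmem _)) (Submodule.smul_mem _ _ (hmem _)))
    (Submodule.smul_mem _ _ (hmem _))

theorem span_image2_kronecker {R l m n p : Type*} [Field R] [Fintype l] [Fintype m] [Fintype n]
    [Fintype p] [DecidableEq l] [DecidableEq m] [DecidableEq n] [DecidableEq p]
    {s : Set (Matrix l m R)} {t : Set (Matrix n p R)} (hs : Submodule.span R s = ⊤)
    (ht : Submodule.span R t = ⊤) :
    Submodule.span R (Set.image2 (· ⊗ₖ ·) s t) = ⊤ := by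
  rw [eq_top_iff, ← (stdBasis R (l × n) (m × p)).span_eq, Submodule.span_le]
  rintro _ ⟨⟨⟨i₁, i₂⟩, ⟨j₁, j₂⟩⟩, rfl⟩
  rw [stdBasis_eq_single, ← mul_one (1 : R), ← single_kronecker_single]
  have := Submodule.map₂_span_span R (kroneckerBilinear (R := R) (α := R)) s t
  rw [hs, ht] at this
  exact this ▸ Submodule.apply_mem_map₂ _ Submodule.mem_top Submodule.mem_top

end Matrix

section ProductStates

open Matrix

variable {α β : Type*} [Fintype α] [Fintype β]

def pureProductStates (α β : Type*) [Fintype α] [Fintype β] :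
    Set (Matrix (α × β) (α × β) ℂ) :=
  {ρ | ∃ (a : α → ℂ) (b : β → ℂ), ∑ x, ‖a x‖ ^ 2 = 1 ∧ ∑ y, ‖b y‖ ^ 2 = 1 ∧
    ρ = prodState a b}

theorem prodState_eq_kronecker (a : α → ℂ) (b : β → ℂ) :
    prodState a b = vecMulVec a (star a) ⊗ₖ vecMulVec b (star b) := rfl

theorem prodState_smul (c d : ℂ) (a : α → ℂ) (b : β → ℂ) :
    prodState (c • a) (d • b) = (c * star c * (d * star d)) • prodState a b := by
  ext x y
  simp only [prodState, Pi.smul_apply, smul_eq_mul, Matrix.smul_apply, star_mul']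
  ring

theorem isSelfAdjoint_prodState (a : α → ℂ) (b : β → ℂ) : IsSelfAdjoint (prodState a b) := by
  ext x y
  simp only [star_apply, prodState, star_mul', star_star]
  ring

theorem trace_vecMulVec_star_self (v : α → ℂ) :
    trace (vecMulVec v (star v)) = ((∑ x, ‖v x‖ ^ 2 : ℝ) : ℂ) := by
  simp [trace_vecMulVec, dotProduct, Complex.mul_conj']

theorem trace_prodState {a : α → ℂ} {b : β → ℂ} (ha : ∑ x, ‖a x‖ ^ 2 = 1)
    (hb : ∑ y, ‖b y‖ ^ 2 = 1) : (prodState a b).trace = 1 := by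
  rw [prodState_eq_kronecker, trace_kronecker, trace_vecMulVec_star_self,
    trace_vecMulVec_star_self, ha, hb]
  norm_num

theorem exists_smul_sum_norm_sq_eq_one {a : α → ℂ} (ha : a ≠ 0) :
    ∃ c : ℂ, c ≠ 0 ∧ ∑ x, ‖(c • a) x‖ ^ 2 = 1 := by
  set N := ∑ x, ‖a x‖ ^ 2
  have hN : 0 < N := by
    obtain ⟨x, hx⟩ := Function.ne_iff.1 ha
    exact Finset.sum_pos' (fun _ _ => by positivity)
      ⟨x, Finset.mem_univ _, pow_pos (norm_pos_iff.2 hx) 2⟩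
  refine ⟨((Real.sqrt N)⁻¹ : ℝ), by simpa using (Real.sqrt_pos.2 hN).ne', ?_⟩
  simp only [Pi.smul_apply, smul_eq_mul, norm_mul, mul_pow, Complex.norm_real, norm_inv,
    Real.norm_eq_abs, sq_abs, inv_pow, Real.sq_sqrt hN.le, ← Finset.mul_sum]
  exact inv_mul_cancel₀ hN.ne'

theorem prodState_mem_span_pureProductStates (a : α → ℂ) (b : β → ℂ) :
    prodState a b ∈ Submodule.span ℂ (pureProductStates α β) := by
  by_cases hab : a = 0 ∨ b = 0
  · have : prodState a b = 0 := by
      rcases hab with rfl | rfl <;> ext <;> simp [prodState]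
    exact this ▸ Submodule.zero_mem _
  obtain ⟨c, hc, hca⟩ := exists_smul_sum_norm_sq_eq_one (not_or.1 hab).1
  obtain ⟨d, hd, hdb⟩ := exists_smul_sum_norm_sq_eq_one (not_or.1 hab).2
  have hcd : c * star c * (d * star d) ≠ 0 := by simp [hc, hd]
  rw [← inv_smul_smul₀ hcd (prodState a b), ← prodState_smul]
  exact Submodule.smul_mem _ _ (Submodule.subset_span ⟨_, _, hca, hdb, rfl⟩)

theorem span_pureProductStates [DecidableEq α] [DecidableEq β] :
    Submodule.span ℂ (pureProductStates α β) = ⊤ := by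
  refine top_unique ?_
  rw [← span_image2_kronecker span_vecMulVec_star_self span_vecMulVec_star_self,
    Submodule.span_le]
  rintro _ ⟨_, ⟨a, rfl⟩, _, ⟨b, rfl⟩, rfl⟩
  exact prodState_mem_span_pureProductStates a b

theorem setOf_sepState_eq_convexHull :
    {ρ | SepState ρ} = convexHull ℝ (pureProductStates α β) := by
  ext ρ
  constructor
  · rintro ⟨k, p, a, b, hp, hsum, ha, hb, rfl⟩
    simp only [Complex.coe_smul]
    exact (convex_convexHull ℝ _).sum_mem (fun i _ => hp i) hsum
      fun i _ => subset_convexHull ℝ _ ⟨a i, b i, ha i, hb i, rfl⟩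
  · intro hρ
    obtain ⟨ι, _, w, z, hw, hsum, hz, rfl⟩ := mem_convexHull_iff_exists_fintype.1 hρ
    choose a b ha hb hz using hz
    let e := (Fintype.equivFin ι).symm
    refine ⟨Fintype.card ι, w ∘ e, a ∘ e, b ∘ e, fun i => hw _, (e.sum_comp w).trans hsum,
      fun i => ha _, fun i => hb _, ?_⟩
    simp only [Function.comp_apply, Complex.coe_smul, ← hz]
    exact (e.sum_comp fun i => w i • z i).symm

theorem trace_eq_one_of_mem_convexHull {ρ : Matrix (α × β) (α × β) ℂ}
    (hρ : ρ ∈ convexHull ℝ (pureProductStates α β)) : ρ.trace = 1 := by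
  refine convexHull_min (t := {M | M.trace = 1}) ?_ (fun M hM N hN a b _ _ hab => ?_) hρ
  · rintro _ ⟨a, b, ha, hb, rfl⟩
    exact trace_prodState ha hb
  · simp only [Set.mem_ofPred_eq] at hM hN ⊢
    rw [trace_add, trace_smul, trace_smul, hM, hN, Complex.real_smul, Complex.real_smul,
      mul_one, mul_one]
    exact_mod_cast hab

end ProductStates

section Robustness

open Matrix

variable {α β : Type*} [Fintype α] [Fintype β] [DecidableEq α] [DecidableEq β]

theorem robustness_eq_sInf_robustnessSet (σ : Matrix (α × β) (α × β) ℂ) :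
    robustness σ = sInf (robustnessSet (convexHull ℝ (pureProductStates α β)) σ) := by
  simp only [robustness, robustnessSet, ← setOf_sepState_eq_convexHull, Complex.coe_smul]
  rfl

theorem robustnessSet_nonempty_of_isHermitian {σ : Matrix (α × β) (α × β) ℂ}
    (hσ : σ.IsHermitian) (htr : σ.trace = 1) :
    (robustnessSet (convexHull ℝ (pureProductStates α β)) σ).Nonempty := by
  have hne : (pureProductStates α β).Nonempty := by
    rcases isEmpty_or_nonempty (α × β) with _ | ⟨x, y⟩
    · simp [trace] at htr
    exact ⟨_, Pi.single x 1, Pi.single y 1, by simp [Pi.single_apply, apply_ite],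
      by simp [Pi.single_apply, apply_ite], rfl⟩
  have hspan : σ ∈ Submodule.span ℝ (pureProductStates α β) :=
    mem_span_real_of_isSelfAdjoint (by
      rintro _ ⟨a, b, -, -, rfl⟩
      exact isSelfAdjoint_prodState a b)
      (span_pureProductStates (α := α) (β := β) ▸ Submodule.mem_top) hσ
  obtain ⟨a, b, -, hb, ρ, hρ, π, hπ, rfl⟩ := exists_eq_smul_sub_smul_of_mem_span hne hspan
  have hab : a = 1 + b := by
    rw [trace_sub, trace_smul, trace_smul, trace_eq_one_of_mem_convexHull hρ,
      trace_eq_one_of_mem_convexHull hπ, Complex.real_smul, Complex.real_smul, mul_one,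
      mul_one] at htr
    have : a - b = 1 := by exact_mod_cast htr
    linarith
  exact ⟨b, mem_robustnessSet_iff.2 ⟨hb, π, hπ, ρ, hρ, by rw [← hab]; module⟩⟩

end Robustness

/-- The robustness of entanglement is convex. -/
theorem robustness_convex {m : ℕ} (σ₁ σ₂ : Matrix (Fin m × Fin m) (Fin m × Fin m) ℂ)
    (h₁ : IsDensity σ₁) (h₂ : IsDensity σ₂) (t : ℝ) (ht0 : 0 ≤ t) (ht1 : t ≤ 1) :
    robustness (((t : ℝ) : ℂ) • σ₁ + (((1 - t : ℝ)) : ℂ) • σ₂) ≤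
      t * robustness σ₁ + (1 - t) * robustness σ₂ := by
  simp only [robustness_eq_sInf_robustnessSet, Complex.coe_smul]
  simpa only [smul_eq_mul] using (convex_convexHull ℝ _).convexOn_sInf_robustnessSet.2
    (robustnessSet_nonempty_of_isHermitian h₁.1.1 h₁.2)
    (robustnessSet_nonempty_of_isHermitian h₂.1.1 h₂.2) ht0 (sub_nonneg.2 ht1)
    (add_sub_cancel t 1)

end
end

section
/- If σ is a density matrix and s ≥ 0, π separable, are such that (σ + sπ)/(1+s) is separable, then for every Hermitian W with 0 ≤ tr(Wτ) ≤ 1 on all separable τ: tr(Wσ) ≥ −s. Hence R(σ) ≥ −tr(Wσ) for every such W. -/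
open scoped BigOperators Matrix ComplexOrder

noncomputable section

lemma aux_witness_bound {m : ℕ} (σ π : Matrix (Fin m × Fin m) (Fin m × Fin m) ℂ)
    (s : ℝ) (hs : 0 ≤ s) (hπ : SepState π)
    (hmix : SepState ((((1 + s)⁻¹ : ℝ) : ℂ) • σ + (((s / (1 + s)) : ℝ) : ℂ) • π))
    (W : Matrix (Fin m × Fin m) (Fin m × Fin m) ℂ)
    (hwit : ∀ τ : Matrix (Fin m × Fin m) (Fin m × Fin m) ℂ, SepState τ → 0 ≤ (W * τ).trace.re ∧ (W * τ).trace.re ≤ 1) :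
    -s ≤ (W * σ).trace.re := by
  have h1 := (hwit _ hmix).1
  have h2 := (hwit π hπ).2
  have hs1 : (0:ℝ) < 1 + s := by linarith
  have key : (W * ((((1 + s)⁻¹ : ℝ) : ℂ) • σ + (((s / (1 + s)) : ℝ) : ℂ) • π)).trace.re
      = (1 + s)⁻¹ * (W * σ).trace.re + (s / (1 + s)) * (W * π).trace.re := by
    rw [Matrix.mul_add, Matrix.mul_smul, Matrix.mul_smul, Matrix.trace_add,
      Matrix.trace_smul, Matrix.trace_smul]
    simp only [smul_eq_mul, Complex.add_re, Complex.re_ofReal_mul]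
  rw [key] at h1
  have h3 : 0 ≤ (W * σ).trace.re + s * (W * π).trace.re := by
    have := mul_le_mul_of_nonneg_left h1 hs1.le
    field_simp at this ⊢
    nlinarith
  nlinarith

/-- If (σ + sπ)/(1+s) is separable then every normalized witness satisfies
tr(Wσ) ≥ -s; hence R(σ) ≥ -tr(Wσ). -/
theorem witness_bound_from_decomposition {m : ℕ} (σ π : Matrix (Fin m × Fin m) (Fin m × Fin m) ℂ) (hσ : IsDensity σ)
    (s : ℝ) (hs : 0 ≤ s) (hπ : SepState π)
    (hmix : SepState ((((1 + s)⁻¹ : ℝ) : ℂ) • σ + (((s / (1 + s)) : ℝ) : ℂ) • π))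
    (W : Matrix (Fin m × Fin m) (Fin m × Fin m) ℂ) (hW : W.IsHermitian)
    (hwit : ∀ τ : Matrix (Fin m × Fin m) (Fin m × Fin m) ℂ, SepState τ → 0 ≤ (W * τ).trace.re ∧ (W * τ).trace.re ≤ 1) :
    -s ≤ (W * σ).trace.re ∧ -(W * σ).trace.re ≤ robustness σ := by
  have h1 := aux_witness_bound σ π s hs hπ hmix W hwit
  refine ⟨h1, ?_⟩
  have hmem : s ∈ { s : ℝ | 0 ≤ s ∧ ∃ π : Matrix (Fin m × Fin m) (Fin m × Fin m) ℂ, SepState π ∧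
      SepState ((((1 + s)⁻¹ : ℝ) : ℂ) • σ + (((s / (1 + s)) : ℝ) : ℂ) • π) } := ⟨hs, π, hπ, hmix⟩
  apply le_csInf ⟨s, hmem⟩
  rintro s' ⟨hs'0, π', hπ', hmix'⟩
  have := aux_witness_bound σ π' s' hs'0 hπ' hmix' W hwit
  linarith

end
end

section
/- For any density matrix σ on C^m ⊗ C^m, R(σ) ≤ m² − 1, i.e., there exists a separable state π such that (σ + sπ)/(1+s) is separable for s = m² − 1. -/
open scoped BigOperators Matrix ComplexOrder

noncomputable section


namespace RobAux

def ω : ℂ := Complex.exp (2 * Real.pi * Complex.I / 3)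

lemma ω_pow_three : ω ^ 3 = 1 := by
  rw [ω, ← Complex.exp_nat_mul]
  rw [show (3:ℕ) * (2 * (Real.pi:ℂ) * Complex.I / 3) = 2 * Real.pi * Complex.I by push_cast; ring]
  exact Complex.exp_two_pi_mul_I

lemma ω_ne_one : ω ≠ 1 := by
  rw [ω]
  intro h
  obtain ⟨n, hn⟩ := Complex.exp_eq_one_iff.mp h
  have h2 : (2 * (Real.pi:ℂ) * Complex.I) ≠ 0 := by
    simp [Real.pi_ne_zero, Complex.I_ne_zero]
  have h3 : ((3 * n - 1 : ℂ)) * (2 * Real.pi * Complex.I) = 0 := by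
    linear_combination (-3 : ℂ) * hn
  have h4 : (3 * n - 1 : ℂ) = 0 := by
    rcases mul_eq_zero.mp h3 with h | h
    · exact h
    · exact absurd h h2
  have h5 : ((3 * n - 1 : ℤ) : ℂ) = 0 := by push_cast; linear_combination h4
  have h6 : (3 * n - 1 : ℤ) = 0 := by exact_mod_cast h5
  omega

lemma ω_abs : ‖ω‖ = 1 := by
  rw [ω, Complex.norm_exp]
  simp

def e (z : ZMod 3) : ℂ := ω ^ z.val

lemma e_zero : e 0 = 1 := by simp [e]

lemma ω_pow_mod (n : ℕ) : ω ^ (n % 3) = ω ^ n := by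
  conv_rhs => rw [← Nat.mod_add_div n 3, pow_add, pow_mul, ω_pow_three, one_pow, mul_one]

lemma e_add (a b : ZMod 3) : e (a + b) = e a * e b := by
  rw [e, e, e, ← pow_add, ZMod.val_add, ω_pow_mod]

lemma e_mul_e_neg (z : ZMod 3) : e z * e (-z) = 1 := by
  rw [← e_add]; simp [e_zero]

lemma star_e (z : ZMod 3) : star (e z) = e (-z) := by
  have h1 : e z * star (e z) = 1 := by
    rw [Complex.star_def, Complex.mul_conj]
    norm_cast
    rw [Complex.normSq_eq_norm_sq]
    simp [e, norm_pow, ω_abs]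
  have h2 := e_mul_e_neg z
  have hz : e z ≠ 0 := by
    intro h; rw [h, zero_mul] at h1; exact one_ne_zero h1.symm
  rw [← h1] at h2
  exact ((mul_left_cancel₀ hz h2.symm).symm).symm

lemma e_sum {ι : Type*} (s : Finset ι) (g : ι → ZMod 3) :
    e (∑ r ∈ s, g r) = ∏ r ∈ s, e (g r) := by
  induction s using Finset.cons_induction with
  | empty => simp [e_zero]
  | cons a s ha ih => rw [Finset.sum_cons, Finset.prod_cons, e_add, ih]

lemma e_sum_zmod (d : ZMod 3) :
    ∑ z : ZMod 3, e (d * z) = if d = 0 then 3 else 0 := by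
  have huniv : (Finset.univ : Finset (ZMod 3)) = {0, 1, 2} := by decide
  have hsum : ∀ d : ZMod 3, ∑ z : ZMod 3, e (d * z) = e (d * 0) + (e (d * 1) + e (d * 2)) := by
    intro d
    rw [huniv]
    rw [Finset.sum_insert (by decide), Finset.sum_insert (by decide), Finset.sum_singleton]
  have hω2 : 1 + ω + ω ^ 2 = 0 := by
    have h : (ω - 1) * (1 + ω + ω ^ 2) = 0 := by linear_combination ω_pow_three
    rcases mul_eq_zero.mp h with h | h
    · exact absurd (sub_eq_zero.mp h) ω_ne_one
    · exact h
  have he1 : e 1 = ω := by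
    show ω ^ (1 : ZMod 3).val = ω
    rw [show (1 : ZMod 3).val = 1 from rfl, pow_one]
  have he2 : e 2 = ω ^ 2 := by
    show ω ^ (2 : ZMod 3).val = ω ^ 2
    rw [show (2 : ZMod 3).val = 2 from rfl]
  have hd := (show ∀ d : ZMod 3, d = 0 ∨ d = 1 ∨ d = 2 by decide) d
  rcases hd with rfl | rfl | rfl
  · simp [hsum, e_zero]
  · rw [hsum, show (1*0 : ZMod 3) = 0 by decide, show (1*1 : ZMod 3) = 1 by decide,
      show (1*2 : ZMod 3) = 2 by decide, e_zero, he1, he2,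
      if_neg (by decide : ¬(1:ZMod 3) = 0)]
    linear_combination hω2
  · rw [hsum, show (2*0 : ZMod 3) = 0 by decide, show (2*1 : ZMod 3) = 2 by decide,
      show (2*2 : ZMod 3) = 1 by decide, e_zero, he1, he2,
      if_neg (by decide : ¬(2:ZMod 3) = 0)]
    linear_combination hω2

def dcoef {m : ℕ} (p q k l : Fin m) (r : Fin m) : ZMod 3 :=
  (if r = p then 1 else 0) - (if r = q then 1 else 0) - (if r = k then 1 else 0)
    + (if r = l then 1 else 0)

lemma d_zero_iff {m : ℕ} (p q k l : Fin m) :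
    (∀ r, dcoef p q k l r = 0) ↔ ((p = q ∧ k = l) ∨ (p = k ∧ q = l)) := by
  constructor
  · intro h
    by_cases hpq : p = q
    · subst hpq
      left
      refine ⟨rfl, ?_⟩
      by_contra hkl
      have hk := h k
      rw [dcoef, if_pos rfl, if_neg (fun hh => hkl hh)] at hk
      split_ifs at hk <;> exact absurd hk (by decide)
    · by_cases hpk : p = k
      · subst hpk
        right
        refine ⟨rfl, ?_⟩
        by_contra hql
        have hq := h q
        have hqp : ¬ q = p := fun hh => hpq hh.symm
        rw [dcoef, if_neg hqp, if_pos rfl, if_neg hql] at hq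
        exact absurd hq (by decide)
      · exfalso
        have hp := h p
        rw [dcoef, if_pos rfl, if_neg hpq, if_neg hpk] at hp
        split_ifs at hp <;> exact absurd hp (by decide)
  · rintro (⟨rfl, rfl⟩ | ⟨rfl, rfl⟩) r <;> (rw [dcoef]; split_ifs <;> ring)

lemma phase_sum {m : ℕ} (p q k l : Fin m) :
    ∑ f : Fin m → ZMod 3, e (f p) * e (- f q) * e (- f k) * e (f l)
      = if (p = q ∧ k = l) ∨ (p = k ∧ q = l) then (3:ℂ)^m else 0 := by
  have hterm : ∀ f : Fin m → ZMod 3,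
      e (f p) * e (- f q) * e (- f k) * e (f l) = ∏ r, e (dcoef p q k l r * f r) := by
    intro f
    have hsum : ∑ r, dcoef p q k l r * f r = f p - f q - f k + f l := by
      simp only [dcoef, sub_mul, add_mul, ite_mul, one_mul, zero_mul]
      rw [Finset.sum_add_distrib, Finset.sum_sub_distrib, Finset.sum_sub_distrib]
      simp [Finset.sum_ite_eq']
    rw [← e_sum, hsum]
    have : f p - f q - f k + f l = f p + (- f q) + (- f k) + f l := by ring
    rw [this, e_add, e_add, e_add]
  rw [Finset.sum_congr rfl (fun f _ => hterm f)]
  rw [← Fintype.prod_sum (fun r z => e (dcoef p q k l r * z))]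
  rw [Finset.prod_congr rfl (fun r _ => e_sum_zmod (dcoef p q k l r))]
  by_cases hall : ∀ r, dcoef p q k l r = 0
  · rw [if_pos ((d_zero_iff p q k l).mp hall)]
    rw [Finset.prod_congr rfl (fun r _ => if_pos (hall r))]
    simp
  · rw [if_neg (fun hc => hall ((d_zero_iff p q k l).mpr hc))]
    push_neg at hall
    obtain ⟨r0, hr0⟩ := hall
    exact Finset.prod_eq_zero (Finset.mem_univ r0) (if_neg hr0)

variable {m : ℕ}

def uvec (c : Fin m × Fin m → ℂ) (f : Fin m → ZMod 3) : Fin m → ℂ :=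
  fun i => ∑ p, c (i, p) * e (f p)
def vvec (f : Fin m → ZMod 3) : Fin m → ℂ := fun i => e (- f i)
def wvec (c : Fin m × Fin m → ℂ) (p : Fin m) : Fin m → ℂ := fun i => c (i, p)
def evec (p : Fin m) : Fin m → ℂ := fun i => if i = p then 1 else 0
def Pmat (c : Fin m × Fin m → ℂ) : Matrix (Fin m × Fin m) (Fin m × Fin m) ℂ :=
  fun x y => c x * star (c y)
def Gmat (c : Fin m × Fin m → ℂ) : Matrix (Fin m × Fin m) (Fin m × Fin m) ℂ :=
  fun x y => if x.2 = y.2 then ∑ p, c (x.1, p) * star (c (y.1, p)) else 0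
def Dmat (c : Fin m × Fin m → ℂ) : Matrix (Fin m × Fin m) (Fin m × Fin m) ℂ :=
  fun x y => if x.2 = y.2 then c (x.1, x.2) * star (c (y.1, x.2)) else 0

lemma key1 (c : Fin m × Fin m → ℂ) :
    ∑ f : Fin m → ZMod 3, prodState (uvec c f) (vvec f)
      = ((3:ℂ)^m) • (Pmat c + Gmat c - Dmat c) := by
  ext ⟨i, k⟩ ⟨j, l⟩
  have hterm : ∀ f : Fin m → ZMod 3,
      prodState (uvec c f) (vvec f) (i,k) (j,l)
        = ∑ p, ∑ q, (c (i,p) * star (c (j,q))) *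
            (e (f p) * e (- f q) * e (- f k) * e (f l)) := by
    intro f
    show (uvec c f i * star (uvec c f j)) * (vvec f k * star (vvec f l)) = _
    simp only [uvec, vvec]
    rw [star_sum]
    simp only [star_mul', star_e, neg_neg]
    rw [Finset.sum_mul_sum]
    rw [Finset.sum_mul]
    refine Finset.sum_congr rfl fun p _ => ?_
    rw [Finset.sum_mul]
    refine Finset.sum_congr rfl fun q _ => ?_
    ring
  rw [Matrix.sum_apply]
  rw [Finset.sum_congr rfl (fun f _ => hterm f)]
  rw [Finset.sum_comm]
  have hswap : ∀ p, ∑ f : Fin m → ZMod 3, ∑ q, (c (i,p) * star (c (j,q))) *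
      (e (f p) * e (- f q) * e (- f k) * e (f l))
      = ∑ q, (c (i,p) * star (c (j,q))) *
          (if (p = q ∧ k = l) ∨ (p = k ∧ q = l) then (3:ℂ)^m else 0) := by
    intro p
    rw [Finset.sum_comm]
    refine Finset.sum_congr rfl fun q _ => ?_
    rw [← Finset.mul_sum, phase_sum]
  rw [Finset.sum_congr rfl (fun p _ => hswap p)]
  rw [Matrix.smul_apply, Matrix.sub_apply, Matrix.add_apply]
  by_cases hkl : k = l
  · subst hkl
    have hinner : ∀ p, ∑ q, (c (i,p) * star (c (j,q))) *
        (if (p = q ∧ k = k) ∨ (p = k ∧ q = k) then (3:ℂ)^m else 0)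
        = (c (i,p) * star (c (j,p))) * (3:ℂ)^m := by
      intro p
      rw [Finset.sum_eq_single p]
      · rw [if_pos (Or.inl ⟨rfl, rfl⟩)]
      · intro q _ hq
        rw [if_neg, mul_zero]
        rintro (⟨h, -⟩ | ⟨h1, h2⟩)
        · exact hq h.symm
        · exact hq (h2.trans h1.symm)
      · intro h; exact absurd (Finset.mem_univ p) h
    rw [Finset.sum_congr rfl (fun p _ => hinner p)]
    simp only [Pmat, Gmat, Dmat, if_pos rfl, if_true, smul_eq_mul]
    rw [← Finset.sum_mul]
    ring
  · rw [Finset.sum_eq_single k]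
    · rw [Finset.sum_eq_single l]
      · rw [if_pos (Or.inr ⟨rfl, rfl⟩)]
        simp only [Pmat, Gmat, Dmat, if_neg hkl, smul_eq_mul]
        ring
      · intro q _ hq
        rw [if_neg, mul_zero]
        rintro (⟨-, h⟩ | ⟨-, h2⟩)
        · exact hkl h
        · exact hq h2
      · intro h; exact absurd (Finset.mem_univ l) h
    · intro p _ hp
      apply Finset.sum_eq_zero
      intro q _
      rw [if_neg, mul_zero]
      rintro (⟨-, h⟩ | ⟨h1, -⟩)
      · exact hkl h
      · exact hp h1
    · intro h; exact absurd (Finset.mem_univ k) h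

lemma key2 (c : Fin m × Fin m → ℂ) :
    ∑ p, prodState (wvec c p) (evec p) = Dmat c := by
  ext ⟨i, k⟩ ⟨j, l⟩
  rw [Matrix.sum_apply]
  have hterm : ∀ p, prodState (wvec c p) (evec p) (i,k) (j,l)
      = if k = p then (if l = p then c (i,p) * star (c (j,p)) else 0) else 0 := by
    intro p
    show (wvec c p i * star (wvec c p j)) * (evec p k * star (evec p l)) = _
    simp only [wvec, evec]
    split_ifs <;> simp <;> ring
  rw [Finset.sum_congr rfl (fun p _ => hterm p)]
  rw [Finset.sum_ite_eq Finset.univ k]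
  simp only [Finset.mem_univ, if_true, Dmat]
  by_cases hkl : k = l
  · subst hkl; simp
  · rw [if_neg (fun h => hkl h.symm), if_neg hkl]

lemma key3 (c : Fin m × Fin m → ℂ) :
    ∑ p, ∑ q, prodState (wvec c p) (evec q) = Gmat c := by
  ext ⟨i, k⟩ ⟨j, l⟩
  rw [Matrix.sum_apply]
  have hterm : ∀ p, (∑ q, prodState (wvec c p) (evec q)) (i,k) (j,l)
      = if k = l then c (i,p) * star (c (j,p)) else 0 := by
    intro p
    rw [Matrix.sum_apply]
    have h2 : ∀ q, prodState (wvec c p) (evec q) (i,k) (j,l)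
        = if k = q then (if l = q then c (i,p) * star (c (j,p)) else 0) else 0 := by
      intro q
      show (wvec c p i * star (wvec c p j)) * (evec q k * star (evec q l)) = _
      simp only [wvec, evec]
      split_ifs <;> simp <;> ring
    rw [Finset.sum_congr rfl (fun q _ => h2 q), Finset.sum_ite_eq Finset.univ k]
    simp only [Finset.mem_univ, if_true]
    by_cases hkl : k = l
    · subst hkl; simp
    · rw [if_neg (fun h => hkl h.symm), if_neg hkl]
  rw [Finset.sum_congr rfl (fun p _ => hterm p)]
  simp only [Gmat]
  by_cases hkl : k = l
  · simp [hkl]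
  · simp [hkl]

lemma prodScaleL (t : ℝ) (x y : Fin m → ℂ) :
    prodState (fun i => (t:ℂ) * x i) y = (((t^2 : ℝ) : ℂ)) • prodState x y := by
  ext a b
  simp only [prodState, Matrix.smul_apply, smul_eq_mul, star_mul', Complex.star_def,
    Complex.conj_ofReal]
  push_cast
  ring

lemma prodScaleR (t : ℝ) (x y : Fin m → ℂ) :
    prodState x (fun i => (t:ℂ) * y i) = (((t^2 : ℝ) : ℂ)) • prodState x y := by
  ext a b
  simp only [prodState, Matrix.smul_apply, smul_eq_mul, star_mul', Complex.star_def,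
    Complex.conj_ofReal]
  push_cast
  ring

lemma mul_star_self (z : ℂ) : z * star z = ((‖z‖^2 : ℝ) : ℂ) := by
  rw [Complex.star_def, Complex.mul_conj, Complex.normSq_eq_norm_sq]

def nrm (v : Fin m → ℂ) : ℝ := ∑ i, ‖v i‖^2

lemma nrm_nonneg (v : Fin m → ℂ) : 0 ≤ nrm v :=
  Finset.sum_nonneg fun i _ => sq_nonneg _

lemma nrm_eq_zero {v : Fin m → ℂ} (h : nrm v = 0) : v = 0 := by
  funext i
  have := (Finset.sum_eq_zero_iff_of_nonneg (fun i _ => sq_nonneg ‖v i‖)).mp h i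
    (Finset.mem_univ i)
  have h2 : ‖v i‖ = 0 := by
    have := sq_eq_zero_iff.mp this
    exact this
  simpa using h2

lemma sum_mul_star_self (v : Fin m → ℂ) :
    ∑ i, v i * star (v i) = ((nrm v : ℝ) : ℂ) := by
  rw [nrm]
  push_cast
  exact Finset.sum_congr rfl fun i _ => by rw [mul_star_self]; push_cast; ring

lemma trace_prodState (a b : Fin m → ℂ) :
    (prodState a b).trace = ((nrm a * nrm b : ℝ) : ℂ) := by
  have : (prodState a b).trace
      = (∑ i, a i * star (a i)) * (∑ i, b i * star (b i)) := by
    rw [Matrix.trace, Fintype.sum_mul_sum]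
    rw [show (∑ i : Fin m × Fin m, (prodState a b).diag i)
        = ∑ i : Fin m × Fin m, (a i.1 * star (a i.1)) * (b i.2 * star (b i.2)) from rfl]
    rw [Fintype.sum_prod_type]
  rw [this, sum_mul_star_self, sum_mul_star_self]
  push_cast
  ring

lemma prodState_zero_left (y : Fin m → ℂ) : prodState (0 : Fin m → ℂ) y = 0 := by
  ext a b; simp [prodState]

lemma prodState_zero_right (x : Fin m → ℂ) : prodState x (0 : Fin m → ℂ) = 0 := by
  ext a b; simp [prodState]

/-- Normalization of a vector (or a standard unit vector if it is zero). -/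
def nzd (hm : 0 < m) (v : Fin m → ℂ) : Fin m → ℂ :=
  if nrm v = 0 then evec ⟨0, hm⟩ else fun i => ((Real.sqrt (nrm v))⁻¹ : ℝ) * v i

lemma nrm_evec (hm : 0 < m) (p : Fin m) : nrm (evec p) = 1 := by
  rw [nrm]
  have : ∀ i, ‖evec p i‖^2 = if i = p then (1:ℝ) else 0 := by
    intro i; rw [evec]; split_ifs <;> simp
  rw [Finset.sum_congr rfl fun i _ => this i, Finset.sum_ite_eq' Finset.univ p]
  simp

lemma nrm_nzd (hm : 0 < m) (v : Fin m → ℂ) : nrm (nzd hm v) = 1 := by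
  rw [nzd]
  split_ifs with h
  · exact nrm_evec hm _
  · rw [nrm]
    have : ∀ i, ‖(((Real.sqrt (nrm v))⁻¹ : ℝ) : ℂ) * v i‖^2
        = (Real.sqrt (nrm v))⁻¹^2 * ‖v i‖^2 := by
      intro i
      rw [norm_mul, mul_pow, Complex.norm_real, Real.norm_eq_abs,
        abs_of_nonneg (by positivity)]
    rw [Finset.sum_congr rfl fun i _ => this i, ← Finset.mul_sum]
    rw [inv_pow, Real.sq_sqrt (nrm_nonneg v)]
    show (nrm v)⁻¹ * nrm v = 1
    exact inv_mul_cancel₀ h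

lemma nzd_spec (hm : 0 < m) (v : Fin m → ℂ) (h : nrm v ≠ 0) :
    nzd hm v = fun i => (((Real.sqrt (nrm v))⁻¹ : ℝ) : ℂ) * v i := by
  rw [nzd, if_neg h]

lemma sep_of_sum_prod (hm : 0 < m) {ι : Type} [Fintype ι]
    (x y : ι → Fin m → ℂ)
    (htr : (∑ j, prodState (x j) (y j)).trace = 1) :
    SepState (∑ j, prodState (x j) (y j)) := by
  classical
  set n := Fintype.card ι with hn
  set eqv := (Fintype.equivFin ι).symm with heqv
  refine ⟨n, fun j => nrm (x (eqv j)) * nrm (y (eqv j)),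
    fun j => nzd hm (x (eqv j)), fun j => nzd hm (y (eqv j)), ?_, ?_, ?_, ?_, ?_⟩
  · intro j; exact mul_nonneg (nrm_nonneg _) (nrm_nonneg _)
  · -- sum of p = 1
    have h1 : ∑ j : Fin n, nrm (x (eqv j)) * nrm (y (eqv j))
        = ∑ i : ι, nrm (x i) * nrm (y i) :=
      Equiv.sum_comp eqv (fun i => nrm (x i) * nrm (y i))
    rw [h1]
    have h2 : (∑ j, prodState (x j) (y j)).trace
        = ((∑ i : ι, nrm (x i) * nrm (y i) : ℝ) : ℂ) := by
      rw [Matrix.trace_sum]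
      push_cast
      exact Finset.sum_congr rfl fun i _ => by rw [trace_prodState]; push_cast; ring
    rw [h2] at htr
    exact_mod_cast htr
  · intro j; exact nrm_nzd hm _
  · intro j; exact nrm_nzd hm _
  · -- the matrix identity
    rw [← Equiv.sum_comp eqv (fun i => prodState (x i) (y i))]
    refine Finset.sum_congr rfl fun j _ => ?_
    show prodState (x (eqv j)) (y (eqv j))
      = ((nrm (x (eqv j)) * nrm (y (eqv j)) : ℝ) : ℂ) •
          prodState (nzd hm (x (eqv j))) (nzd hm (y (eqv j)))
    set v := x (eqv j)
    set w := y (eqv j)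
    by_cases hv : nrm v = 0
    · rw [nrm_eq_zero hv, prodState_zero_left]
      simp [nrm]
    · by_cases hw : nrm w = 0
      · rw [nrm_eq_zero hw, prodState_zero_right]
        simp [nrm]
      · rw [nzd_spec hm v hv, nzd_spec hm w hw, prodScaleL, prodScaleR]
        rw [smul_smul, smul_smul]
        rw [inv_pow, inv_pow, Real.sq_sqrt (nrm_nonneg v), Real.sq_sqrt (nrm_nonneg w)]
        have : ((nrm v * nrm w : ℝ) : ℂ) * (((nrm v)⁻¹ : ℝ) : ℂ) * (((nrm w)⁻¹ : ℝ) : ℂ)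
            = 1 := by
          push_cast
          field_simp
        rw [this, one_smul]

end RobAux

open RobAux

/-- The robustness of entanglement is at most m² - 1: mixing with suitable separable
noise of weight 1 - 1/m² always produces a separable state. -/
theorem robustness_le_dim_bound {m : ℕ} (hm : 1 ≤ m) (σ : Matrix (Fin m × Fin m) (Fin m × Fin m) ℂ) (hσ : IsDensity σ) :
    (∃ π : Matrix (Fin m × Fin m) (Fin m × Fin m) ℂ, SepState π ∧
      SepState ((((1 + ((m : ℝ) ^ 2 - 1))⁻¹ : ℝ) : ℂ) • σ +
        (((((m : ℝ) ^ 2 - 1) / (1 + ((m : ℝ) ^ 2 - 1))) : ℝ) : ℂ) • π)) ∧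
    robustness σ ≤ (m : ℝ) ^ 2 - 1 := by
  have hm0 : 0 < m := hm
  have hm1R : (1:ℝ) ≤ (m:ℝ) := by exact_mod_cast hm
  have hex : ∃ π : Matrix (Fin m × Fin m) (Fin m × Fin m) ℂ, SepState π ∧
      SepState ((((1 + ((m : ℝ) ^ 2 - 1))⁻¹ : ℝ) : ℂ) • σ +
        (((((m : ℝ) ^ 2 - 1) / (1 + ((m : ℝ) ^ 2 - 1))) : ℝ) : ℂ) • π) := by
    by_cases h1 : m = 1
    · subst h1
      have htr := hσ.2
      have htr1 : σ (0,0) (0,0) = 1 := by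
        rw [Matrix.trace] at htr
        simpa [Matrix.diag, Fintype.sum_prod_type] using htr
      have hσeq : σ = prodState (fun _ : Fin 1 => (1:ℂ)) (fun _ : Fin 1 => (1:ℂ)) := by
        ext x y
        have hx : ∀ z : Fin 1 × Fin 1, z = (0,0) := by decide
        rw [hx x, hx y, htr1]
        simp [prodState]
      have hsep : SepState σ := by
        refine ⟨1, fun _ => 1, fun _ _ => 1, fun _ _ => 1, fun _ => zero_le_one,
          by simp, fun _ => by simp, fun _ => by simp, ?_⟩
        rw [hσeq]
        simp
      refine ⟨σ, hsep, ?_⟩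
      simpa using hsep
    · have hm2 : 2 ≤ m := by omega
      have hm2R : (2:ℝ) ≤ (m:ℝ) := by exact_mod_cast hm2
      obtain ⟨hpsd, htr⟩ := hσ
      obtain ⟨B, hB⟩ : ∃ B : Matrix (Fin m × Fin m) (Fin m × Fin m) ℂ, σ = Bᴴ * B := by
        open scoped MatrixOrder Matrix.Norms.L2Operator in
        obtain ⟨B, hB⟩ := CStarAlgebra.nonneg_iff_eq_star_mul_self.mp hpsd.nonneg
        exact ⟨B, hB⟩
      set c : (Fin m × Fin m) → (Fin m × Fin m) → ℂ := fun k x => star (B k x) with hc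
      have hP : σ = ∑ k, Pmat (c k) := by
        rw [hB]
        ext x y
        rw [Matrix.sum_apply, Matrix.mul_apply]
        refine Finset.sum_congr rfl fun k _ => ?_
        simp [Pmat, hc, Matrix.conjTranspose_apply]
      have htrP : ∑ k, (Pmat (c k)).trace = 1 := by
        rw [← Matrix.trace_sum, ← hP, htr]
      have htrG : ∀ k : Fin m × Fin m, (Gmat (c k)).trace = (m:ℂ) * (Pmat (c k)).trace := by
        intro k
        rw [Matrix.trace, Matrix.trace]
        have hL : ∑ x : Fin m × Fin m, (Gmat (c k)).diag x
            = ∑ x : Fin m × Fin m, ∑ p, c k (x.1, p) * star (c k (x.1, p)) :=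
          Finset.sum_congr rfl fun x _ => by simp [Matrix.diag, Gmat]
        rw [hL]
        calc (∑ x : Fin m × Fin m, ∑ p, c k (x.1, p) * star (c k (x.1, p)))
            = ∑ i : Fin m, ∑ _y : Fin m, ∑ p, c k (i, p) * star (c k (i, p)) :=
              Fintype.sum_prod_type _
          _ = ∑ i : Fin m, (m:ℂ) * ∑ p, c k (i, p) * star (c k (i, p)) :=
              Finset.sum_congr rfl fun i _ => by
                rw [Finset.sum_const, Finset.card_univ, Fintype.card_fin, nsmul_eq_mul]
          _ = (m:ℂ) * ∑ i : Fin m, ∑ p, c k (i, p) * star (c k (i, p)) := by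
              rw [Finset.mul_sum]
          _ = (m:ℂ) * ∑ x : Fin m × Fin m, c k x * star (c k x) := by
              rw [Fintype.sum_prod_type]
      -- real scalar constants
      set M2 : ℝ := (m:ℝ)^2 with hM2def
      have hM2 : (0:ℝ) < M2 := by positivity
      have hM21 : (0:ℝ) < M2 - 1 := by rw [hM2def]; nlinarith
      set r : ℝ := (m:ℝ)^2 - (m:ℝ) - 1 with hrdef
      have hr0 : (0:ℝ) ≤ r := by rw [hrdef]; nlinarith
      set t1 : ℝ := Real.sqrt ((M2 - 1)⁻¹) with ht1def
      set t2 : ℝ := Real.sqrt ((M2 * 3^m)⁻¹) with ht2def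
      set t3 : ℝ := Real.sqrt (M2⁻¹) with ht3def
      set t4 : ℝ := Real.sqrt (M2⁻¹ * r) with ht4def
      set t5 : ℝ := Real.sqrt ((M2 - 1)⁻¹ * r) with ht5def
      have ht1 : t1^2 = (M2 - 1)⁻¹ := Real.sq_sqrt (by positivity)
      have ht2 : t2^2 = (M2 * 3^m)⁻¹ := Real.sq_sqrt (by positivity)
      have ht3 : t3^2 = M2⁻¹ := Real.sq_sqrt (by positivity)
      have ht4 : t4^2 = M2⁻¹ * r := Real.sq_sqrt (by positivity)
      have ht5 : t5^2 = (M2 - 1)⁻¹ * r := Real.sq_sqrt (by positivity)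
      set p0 : Fin m := ⟨0, hm0⟩ with hp0
      set τ : Matrix (Fin m × Fin m) (Fin m × Fin m) ℂ := prodState (evec p0) (evec p0) with hτ
      have htrτ : τ.trace = 1 := by
        rw [hτ, trace_prodState, nrm_evec hm0]
        norm_num
      -- the separable noise state π
      set Xπ : ((Fin m × Fin m) × (Fin m × Fin m)) ⊕ Unit → Fin m → ℂ :=
        Sum.elim (fun kpq => fun i => ((t1:ℝ):ℂ) * wvec (c kpq.1) kpq.2.1 i)
                 (fun _ => fun i => ((t5:ℝ):ℂ) * evec p0 i) with hXπ
      set Yπ : ((Fin m × Fin m) × (Fin m × Fin m)) ⊕ Unit → Fin m → ℂ :=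
        Sum.elim (fun kpq => evec kpq.2.2) (fun _ => evec p0) with hYπ
      set π : Matrix (Fin m × Fin m) (Fin m × Fin m) ℂ :=
        ∑ j, prodState (Xπ j) (Yπ j) with hπdef
      have hπ : π = (((M2 - 1)⁻¹ : ℝ) : ℂ) • (∑ k, Gmat (c k))
          + (((M2 - 1)⁻¹ * r : ℝ) : ℂ) • τ := by
        rw [hπdef, Fintype.sum_sum_type]
        congr 1
        · rw [Fintype.sum_prod_type]
          have hone : ∀ k, ∑ pq : Fin m × Fin m,
              prodState (Xπ (Sum.inl (k, pq))) (Yπ (Sum.inl (k, pq)))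
              = (((t1^2 : ℝ)) : ℂ) • Gmat (c k) := by
            intro k
            rw [show (∑ pq : Fin m × Fin m,
                prodState (Xπ (Sum.inl (k, pq))) (Yπ (Sum.inl (k, pq))))
                = ∑ pq : Fin m × Fin m, (((t1^2 : ℝ)) : ℂ) •
                    prodState (wvec (c k) pq.1) (evec pq.2) from
              Finset.sum_congr rfl fun pq _ => by
                rw [hXπ, hYπ]
                simp only [Sum.elim_inl]
                exact prodScaleL t1 (wvec (c k) pq.1) (evec pq.2)]
            rw [← Finset.smul_sum, Fintype.sum_prod_type, key3]
          rw [Finset.sum_congr rfl fun k _ => hone k, ← Finset.smul_sum, ht1]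
        · rw [show (∑ _u : Unit, prodState (Xπ (Sum.inr _u)) (Yπ (Sum.inr _u)))
              = prodState (Xπ (Sum.inr ())) (Yπ (Sum.inr ())) by simp]
          rw [hXπ, hYπ]
          simp only [Sum.elim_inr]
          rw [prodScaleL t5 (evec p0) (evec p0), ht5, hτ]
      have htrπ : π.trace = 1 := by
        rw [hπ, Matrix.trace_add, Matrix.trace_smul, Matrix.trace_smul, Matrix.trace_sum]
        rw [Finset.sum_congr rfl fun k _ => htrG k, ← Finset.mul_sum, htrP, htrτ]
        rw [smul_eq_mul, smul_eq_mul, mul_one, mul_one]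
        have hreal : (M2 - 1)⁻¹ * (m:ℝ) + (M2 - 1)⁻¹ * r = 1 := by
          rw [hrdef, hM2def]
          rw [← mul_add, show (m:ℝ) + ((m:ℝ)^2 - m - 1) = (m:ℝ)^2 - 1 by ring]
          exact inv_mul_cancel₀ (ne_of_gt (by nlinarith))
        calc (((M2 - 1)⁻¹ : ℝ) : ℂ) * (m:ℂ) + (((M2 - 1)⁻¹ * r : ℝ) : ℂ)
            = (((M2 - 1)⁻¹ * (m:ℝ) + (M2 - 1)⁻¹ * r : ℝ) : ℂ) := by push_cast; ring
          _ = 1 := by rw [hreal]; norm_num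
      have hπsep : SepState π := by
        rw [hπdef]
        exact sep_of_sum_prod hm0 Xπ Yπ (by rw [← hπdef, htrπ])
      -- the grand decomposition of the mixed state
      set X : (((Fin m × Fin m) × (Fin m → ZMod 3)) ⊕ ((Fin m × Fin m) × Fin m)) ⊕ Unit
          → Fin m → ℂ :=
        Sum.elim (Sum.elim (fun kf => fun i => ((t2:ℝ):ℂ) * uvec (c kf.1) kf.2 i)
                           (fun kp => fun i => ((t3:ℝ):ℂ) * wvec (c kp.1) kp.2 i))
                 (fun _ => fun i => ((t4:ℝ):ℂ) * evec p0 i) with hX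
      set Y : (((Fin m × Fin m) × (Fin m → ZMod 3)) ⊕ ((Fin m × Fin m) × Fin m)) ⊕ Unit
          → Fin m → ℂ :=
        Sum.elim (Sum.elim (fun kf => vvec kf.2) (fun kp => evec kp.2))
                 (fun _ => evec p0) with hY
      have hsum : ∑ j, prodState (X j) (Y j)
          = ((M2⁻¹ : ℝ) : ℂ) • σ + (((M2 - 1)/M2 : ℝ) : ℂ) • π := by
        rw [Fintype.sum_sum_type, Fintype.sum_sum_type]
        have hA1 : ∑ kf : (Fin m × Fin m) × (Fin m → ZMod 3),
            prodState (X (Sum.inl (Sum.inl kf))) (Y (Sum.inl (Sum.inl kf)))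
            = (((t2^2 : ℝ)) : ℂ) • ((3:ℂ)^m •
                ((∑ k, Pmat (c k)) + (∑ k, Gmat (c k)) - (∑ k, Dmat (c k)))) := by
          rw [Fintype.sum_prod_type]
          have hone : ∀ k, ∑ f : Fin m → ZMod 3,
              prodState (X (Sum.inl (Sum.inl (k, f)))) (Y (Sum.inl (Sum.inl (k, f))))
              = (((t2^2 : ℝ)) : ℂ) • ((3:ℂ)^m • (Pmat (c k) + Gmat (c k) - Dmat (c k))) := by
            intro k
            rw [show (∑ f : Fin m → ZMod 3,
                prodState (X (Sum.inl (Sum.inl (k, f)))) (Y (Sum.inl (Sum.inl (k, f)))))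
                = ∑ f : Fin m → ZMod 3, (((t2^2 : ℝ)) : ℂ) •
                    prodState (uvec (c k) f) (vvec f) from
              Finset.sum_congr rfl fun f _ => by
                rw [hX, hY]
                simp only [Sum.elim_inl]
                exact prodScaleL t2 (uvec (c k) f) (vvec f)]
            rw [← Finset.smul_sum, key1]
          rw [Finset.sum_congr rfl fun k _ => hone k, ← Finset.smul_sum]
          rw [← Finset.smul_sum]
          congr 1
          congr 1
          rw [Finset.sum_sub_distrib, Finset.sum_add_distrib]
        have hA2 : ∑ kp : (Fin m × Fin m) × Fin m,
            prodState (X (Sum.inl (Sum.inr kp))) (Y (Sum.inl (Sum.inr kp)))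
            = (((t3^2 : ℝ)) : ℂ) • (∑ k, Dmat (c k)) := by
          rw [Fintype.sum_prod_type]
          have hone : ∀ k, ∑ p : Fin m,
              prodState (X (Sum.inl (Sum.inr (k, p)))) (Y (Sum.inl (Sum.inr (k, p))))
              = (((t3^2 : ℝ)) : ℂ) • Dmat (c k) := by
            intro k
            rw [show (∑ p : Fin m,
                prodState (X (Sum.inl (Sum.inr (k, p)))) (Y (Sum.inl (Sum.inr (k, p)))))
                = ∑ p : Fin m, (((t3^2 : ℝ)) : ℂ) •
                    prodState (wvec (c k) p) (evec p) from
              Finset.sum_congr rfl fun p _ => by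
                rw [hX, hY]
                simp only [Sum.elim_inl, Sum.elim_inr]
                exact prodScaleL t3 (wvec (c k) p) (evec p)]
            rw [← Finset.smul_sum, key2]
          rw [Finset.sum_congr rfl fun k _ => hone k, ← Finset.smul_sum]
        have hA3 : ∑ _u : Unit, prodState (X (Sum.inr _u)) (Y (Sum.inr _u))
            = (((t4^2 : ℝ)) : ℂ) • τ := by
          rw [show (∑ _u : Unit, prodState (X (Sum.inr _u)) (Y (Sum.inr _u)))
              = prodState (X (Sum.inr ())) (Y (Sum.inr ())) by simp]
          rw [hX, hY]
          simp only [Sum.elim_inr]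
          rw [prodScaleL t4 (evec p0) (evec p0), ht4, hτ]
        rw [hA1, hA2, hA3, hπ, hP, ht2, ht3, ht4]
        have hM2ne : M2 ≠ 0 := ne_of_gt hM2
        have hM21ne : M2 - 1 ≠ 0 := ne_of_gt hM21
        have h3ne : ((3:ℝ)^m) ≠ 0 := by positivity
        have hc1R : ((M2 * 3^m)⁻¹ * 3^m : ℝ) = M2⁻¹ := by
          field_simp
        have hc1 : (((M2 * 3^m)⁻¹ : ℝ) : ℂ) * (3:ℂ)^m = ((M2⁻¹ : ℝ) : ℂ) := by
          rw [show ((3:ℂ)^m) = (((3:ℝ)^m : ℝ) : ℂ) by push_cast; rfl,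
            ← Complex.ofReal_mul, hc1R]
        have hc2R : ((M2 - 1)/M2) * (M2 - 1)⁻¹ = M2⁻¹ := by
          field_simp
        have hc2 : (((M2 - 1)/M2 : ℝ) : ℂ) * (((M2 - 1)⁻¹ : ℝ) : ℂ) = ((M2⁻¹ : ℝ) : ℂ) := by
          rw [← Complex.ofReal_mul, hc2R]
        have hc3R : ((M2 - 1)/M2) * ((M2 - 1)⁻¹ * r) = M2⁻¹ * r := by
          field_simp
        have hc3 : (((M2 - 1)/M2 : ℝ) : ℂ) * (((M2 - 1)⁻¹ * r : ℝ) : ℂ)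
            = ((M2⁻¹ * r : ℝ) : ℂ) := by
          rw [← Complex.ofReal_mul, hc3R]
        rw [smul_smul, hc1, smul_add, smul_smul, smul_smul, hc2, hc3]
        rw [smul_sub, smul_add]
        abel
      have htrT : (∑ j, prodState (X j) (Y j)).trace = 1 := by
        rw [hsum, Matrix.trace_add, Matrix.trace_smul, Matrix.trace_smul, htr, htrπ]
        rw [smul_eq_mul, smul_eq_mul, mul_one, mul_one]
        have hreal : (M2⁻¹ : ℝ) + (M2 - 1)/M2 = 1 := by field_simp; ring
        calc ((M2⁻¹ : ℝ) : ℂ) + (((M2 - 1)/M2 : ℝ) : ℂ)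
            = (((M2⁻¹ : ℝ) + (M2 - 1)/M2 : ℝ) : ℂ) := by push_cast; ring
          _ = 1 := by rw [hreal]; norm_num
      have hTsep : SepState (((M2⁻¹ : ℝ) : ℂ) • σ + (((M2 - 1)/M2 : ℝ) : ℂ) • π) := by
        rw [← hsum]
        exact sep_of_sum_prod hm0 X Y htrT
      refine ⟨π, hπsep, ?_⟩
      have he1 : ((1 + ((m:ℝ)^2 - 1))⁻¹ : ℝ) = (M2⁻¹ : ℝ) := by rw [hM2def]; ring_nf
      have he2 : ((((m:ℝ)^2 - 1) / (1 + ((m:ℝ)^2 - 1))) : ℝ) = ((M2 - 1)/M2 : ℝ) := by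
        rw [hM2def]; ring_nf
      rw [he1, he2]
      exact hTsep
  refine ⟨hex, ?_⟩
  apply csInf_le
  · exact ⟨0, fun s hs => hs.1⟩
  · exact ⟨by nlinarith, hex⟩

end
end

section
/- Monotonicity of robustness under mixing with separable states: for any density matrix σ, separable state π, and t ≥ 0, R((σ + tπ)/(1+t)) ≤ R(σ)/(1+t). -/
open scoped BigOperators Matrix ComplexOrder

noncomputable section

/-! Write `mix s ρ π = (ρ + s π)/(1 + s)`. Two mixings commute after reparametrisation:
mixing `mix t σ π` with `π'` at weight `s/(1+t)` gives `mix (t/(1+s)) (mix s σ π') π`. Since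
separable states are convex, every feasible weight `s` for `σ` thus gives the feasible weight
`s/(1+t)` for `mix t σ π`, whence the bound on infima. Conversely a feasible weight `a` for
`mix t σ π` gives the feasible weight `a + t + a t` for `σ`, which settles the case where no
weight is feasible for `σ` and `robustness σ = sInf ∅ = 0`. -/

section Mixing

variable {n : Type*}

def mix (s : ℝ) (ρ π : Matrix n n ℂ) : Matrix n n ℂ :=
  (((1 + s)⁻¹ : ℝ) : ℂ) • ρ + ((s / (1 + s) : ℝ) : ℂ) • π

@[simp]
theorem mix_zero (ρ π : Matrix n n ℂ) : mix 0 ρ π = ρ := by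
  simp [mix]

theorem mix_mix_comm {s t : ℝ} (hs : 0 ≤ s) (ht : 0 ≤ t) (ρ π π' : Matrix n n ℂ) :
    mix (s / (1 + t)) (mix t ρ π) π' = mix (t / (1 + s)) (mix s ρ π') π := by
  have : (1 + s : ℂ) ≠ 0 := by exact_mod_cast (by positivity : (1 + s : ℝ) ≠ 0)
  have : (1 + t : ℂ) ≠ 0 := by exact_mod_cast (by positivity : (1 + t : ℝ) ≠ 0)
  have : (1 + s + t : ℂ) ≠ 0 := by exact_mod_cast (by positivity : (1 + s + t : ℝ) ≠ 0)
  ext i j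
  simp only [mix, Matrix.add_apply, Matrix.smul_apply, smul_eq_mul]
  push_cast
  field_simp
  ring

theorem mix_mix {a b : ℝ} (ha : 0 ≤ a) (hb : 0 < b) (ρ π π' : Matrix n n ℂ) :
    mix a (mix b ρ π) π' = mix (a + b + a * b) ρ (mix (a * (1 + b) / b) π π') := by
  have : (1 + a : ℂ) ≠ 0 := by exact_mod_cast (by positivity : (1 + a : ℝ) ≠ 0)
  have : (1 + b : ℂ) ≠ 0 := by exact_mod_cast (by positivity : (1 + b : ℝ) ≠ 0)
  have : (b : ℂ) ≠ 0 := by exact_mod_cast hb.ne'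
  have : (1 + a + b + a * b : ℂ) ≠ 0 := by
    exact_mod_cast (by positivity : (1 + a + b + a * b : ℝ) ≠ 0)
  ext i j
  simp only [mix, Matrix.add_apply, Matrix.smul_apply, smul_eq_mul]
  push_cast
  field_simp
  ring

end Mixing

namespace SepState

variable {α β : Type*} [Fintype α] [Fintype β]

theorem convex_comb {ρ₁ ρ₂ : Matrix (α × β) (α × β) ℂ} (h₁ : SepState ρ₁) (h₂ : SepState ρ₂)
    {c d : ℝ} (hc : 0 ≤ c) (hd : 0 ≤ d) (hcd : c + d = 1) :
    SepState ((c : ℂ) • ρ₁ + (d : ℂ) • ρ₂) := by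
  obtain ⟨k₁, p₁, a₁, b₁, hp₁, hs₁, ha₁, hb₁, rfl⟩ := h₁
  obtain ⟨k₂, p₂, a₂, b₂, hp₂, hs₂, ha₂, hb₂, rfl⟩ := h₂
  refine ⟨k₁ + k₂, Fin.append (fun i => c * p₁ i) (fun i => d * p₂ i),
    Fin.append a₁ a₂, Fin.append b₁ b₂, ?_, ?_, ?_, ?_, ?_⟩
  · refine Fin.addCases (fun i => ?_) (fun i => ?_) <;>
      simp only [Fin.append_left, Fin.append_right]
    exacts [mul_nonneg hc (hp₁ i), mul_nonneg hd (hp₂ i)]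
  · simp only [Fin.sum_univ_add, Fin.append_left, Fin.append_right, ← Finset.mul_sum, hs₁, hs₂,
      mul_one, hcd]
  · refine Fin.addCases (fun i => ?_) (fun i => ?_) <;>
      simp only [Fin.append_left, Fin.append_right, ha₁, ha₂]
  · refine Fin.addCases (fun i => ?_) (fun i => ?_) <;>
      simp only [Fin.append_left, Fin.append_right, hb₁, hb₂]
  · simp only [Fin.sum_univ_add, Fin.append_left, Fin.append_right, Finset.smul_sum, smul_smul,
      Complex.ofReal_mul]

theorem mix {ρ π : Matrix (α × β) (α × β) ℂ}
    (hρ : SepState ρ) (hπ : SepState π) {s : ℝ} (hs : 0 ≤ s) : SepState (mix s ρ π) :=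
  hρ.convex_comb hπ (by positivity) (by positivity) (by field_simp)

end SepState

section Robustness

variable {α β : Type*} [Fintype α] [Fintype β]

def separableMixingWeights (ρ : Matrix (α × β) (α × β) ℂ) : Set ℝ :=
  {s | 0 ≤ s ∧ ∃ π, SepState π ∧ SepState (mix s ρ π)}

theorem robustness_eq_sInf [DecidableEq α] [DecidableEq β] (ρ : Matrix (α × β) (α × β) ℂ) :
    robustness ρ = sInf (separableMixingWeights ρ) :=
  rfl

theorem div_mem_separableMixingWeights_mix {ρ π : Matrix (α × β) (α × β) ℂ} {s t : ℝ}
    (hs : s ∈ separableMixingWeights ρ) (hπ : SepState π) (ht : 0 ≤ t) :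
    s / (1 + t) ∈ separableMixingWeights (mix t ρ π) := by
  obtain ⟨hs, π', hπ', hsep⟩ := hs
  refine ⟨by positivity, π', hπ', ?_⟩
  rw [mix_mix_comm hs ht]
  exact hsep.mix hπ (by positivity)

theorem mem_separableMixingWeights_of_mix {ρ π : Matrix (α × β) (α × β) ℂ} {a b : ℝ}
    (ha : a ∈ separableMixingWeights (mix b ρ π)) (hπ : SepState π) (hb : 0 ≤ b) :
    a + b + a * b ∈ separableMixingWeights ρ := by
  obtain ⟨ha, π', hπ', hsep⟩ := ha
  rcases hb.eq_or_lt with rfl | hb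
  · rw [mix_zero] at hsep
    simpa only [mul_zero, add_zero] using ⟨ha, π', hπ', hsep⟩
  · refine ⟨by positivity, _, hπ.mix hπ' (s := a * (1 + b) / b) (by positivity), ?_⟩
    rwa [← mix_mix ha hb]

end Robustness

theorem robustness_mixing_monotone_general {m : ℕ} (σ π : Matrix (Fin m × Fin m) (Fin m × Fin m) ℂ)
    (hπ : SepState π) (t : ℝ) (ht : 0 ≤ t) :
    robustness ((((1 + t)⁻¹ : ℝ) : ℂ) • σ + (((t / (1 + t)) : ℝ) : ℂ) • π) ≤
      robustness σ / (1 + t) := by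
  change robustness (mix t σ π) ≤ robustness σ / (1 + t)
  have ht₁ : 0 < 1 + t := by linarith
  rw [robustness_eq_sInf, robustness_eq_sInf]
  rcases (separableMixingWeights σ).eq_empty_or_nonempty with hσ | hσ
  · have hmix : separableMixingWeights (mix t σ π) = ∅ :=
      Set.eq_empty_of_forall_notMem fun a ha =>
        hσ.subset (mem_separableMixingWeights_of_mix ha hπ ht)
    simp [hσ, hmix]
  · rw [le_div_iff₀ ht₁]
    refine le_csInf hσ fun s hs => ?_
    rw [← le_div_iff₀ ht₁]
    exact csInf_le ⟨0, fun _ h => h.1⟩ (div_mem_separableMixingWeights_mix hs hπ ht)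

/-- Mixing with a separable state decreases robustness: R((σ + tπ)/(1+t)) ≤ R(σ)/(1+t). -/
theorem robustness_mixing_monotone {m : ℕ} (σ π : Matrix (Fin m × Fin m) (Fin m × Fin m) ℂ) (hσ : IsDensity σ)
    (hπ : SepState π) (t : ℝ) (ht : 0 ≤ t) :
    robustness ((((1 + t)⁻¹ : ℝ) : ℂ) • σ + (((t / (1 + t)) : ℝ) : ℂ) • π) ≤
      robustness σ / (1 + t) :=
  robustness_mixing_monotone_general σ π hπ t ht

end
end
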